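/- For every n ≥ 0, the number of simsun permutations of {1,…,n} that avoid the pattern 231 equals the Motzkin number M_n. -/

import Mathlib

/-- `π` is simsun: for every `k`, the subword of the one-line notation of `π`
consisting of the `k` smallest entries (i.e. the values `< k`, in 0-based form)
contains no three consecutive decreasing elements.  Here "three consecutive
decreasing elements of the subword" means positions `a < b < c` whose values are
all `< k`, with no position carrying a value `< k` strictly between `a` and `b`
nor strictly between `b` and `c`, and with `π a > π b > π c`. -/
def IsSimsun {n : ℕ} (π : Equiv.Perm (Fin n)) : Prop :=
  ∀ k : ℕ, ¬ ∃ a b c : Fin n, a < b ∧ b < c ∧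
    (π a : ℕ) < k ∧ (π b : ℕ) < k ∧ (π c : ℕ) < k ∧
    (∀ m : Fin n, a < m → m < b → k ≤ (π m : ℕ)) ∧
    (∀ m : Fin n, b < m → m < c → k ≤ (π m : ℕ)) ∧
    (π c : ℕ) < (π b : ℕ) ∧ (π b : ℕ) < (π a : ℕ)

/-- `π` contains the pattern 231. -/
def Contains231 {n : ℕ} (π : Equiv.Perm (Fin n)) : Prop :=
  ∃ a b c : Fin n, a < b ∧ b < c ∧ π c < π a ∧ π a < π b

/-- The Motzkin numbers: `M 0 = 1` and
`M (n+1) = M n + ∑_{k=0}^{n-1} M k * M (n-1-k)`. -/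
def motzkin : ℕ → ℕ
  | 0 => 1
  | n + 1 => motzkin n + ∑ k ∈ (Finset.range n).attach, motzkin k * motzkin (n - 1 - k)
decreasing_by
  all_goals first
    | omega
    | (have := Finset.mem_range.mp k.2; omega)

/-!
In a simsun 231-avoiding arrangement of `0, …, n`, the entry `0` stands first or second: two
entries just before `0` would form a 231 with it if increasing, and a double descent with it if
decreasing. If `0` is first, the rest is an arbitrary simsun 231-avoider on
`1, …, n`. If `0` is second, preceded by `k + 1`, then avoiding 231 forces every entry below
`k + 1` to come before every entry above it, and the two blocks are independent simsun
231-avoiders of sizes `k` and `n - 1 - k`. Both constructions are reversible, which gives the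
Motzkin recursion `M (n + 1) = M n + ∑ M k * M (n - 1 - k)`.

Simsunness is read through the subwords `l.filter (· < k)`, which commute with concatenating
value-separated blocks and with order-preserving relabelling of the values.
-/

namespace List

variable {α : Type*}

theorem mem_left_and_mem_right_of_triple_eq_append {a b c : α} {r₁ r₂ : List α}
    (h : [a, b, c] = r₁ ++ r₂) (h₁ : r₁ ≠ []) (h₂ : r₂ ≠ []) : a ∈ r₁ ∧ c ∈ r₂ := by
  rcases r₁ with _ | ⟨x, _ | ⟨y, _ | ⟨z, r₁⟩⟩⟩ <;> simp at h <;> grind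

theorem filter_append_filter_not_eq_self {p : α → Bool} :
    ∀ {l : List α}, l.Pairwise (fun a b => p b → p a) → l.filter p ++ l.filter (!p ·) = l
  | [], _ => rfl
  | x :: l, h => by
    rw [pairwise_cons] at h
    by_cases hx : p x
    · simp [hx, filter_append_filter_not_eq_self h.2]
    · have hall : ∀ b ∈ x :: l, ¬ p b := by
        simp only [mem_cons, forall_eq_or_imp]
        exact ⟨hx, fun b hb hb' => hx (h.1 b hb hb')⟩
      rw [filter_eq_nil_iff.2 hall, filter_eq_self.2 (by simpa using hall), nil_append]

variable {p : α → Bool} {l : List α}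

theorem filter_drop_eq_cons_iff {a : ℕ} {y : α} {rest : List α} :
    (l.drop a).filter p = y :: rest ↔ ∃ b, ∃ hb : b < l.length, a ≤ b ∧ l[b] = y ∧ p y ∧
      (∀ m (_ : a ≤ m) (_ : m < b), p l[m] = false) ∧ (l.drop (b + 1)).filter p = rest := by
  rw [filter_eq_cons_iff]
  constructor
  · rintro ⟨l₁, l₂, hl, hgap, hy, rfl⟩
    have hL : l.length = a + (l₁.length + l₂.length + 1) := by
      have := congrArg length hl; simp at this; omega
    have hget : ∀ i (hi : i < (l₁ ++ y :: l₂).length),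
        l[a + i]'(by simp at hi; omega) = (l₁ ++ y :: l₂)[i] := by
      intro i hi; simp only [← hl, getElem_drop]
    refine ⟨a + l₁.length, by omega, by omega, by simpa using hget l₁.length (by simp), hy,
      fun m ham hmb => ?_, ?_⟩
    · obtain ⟨i, rfl⟩ := Nat.exists_eq_add_of_le ham
      rw [hget i (by simp; omega), getElem_append_left (by omega)]
      simpa using hgap _ (getElem_mem _)
    · rw [← drop_drop, ← drop_drop, hl]; simp
  · rintro ⟨b, hb, hab, rfl, hy, hgap, rfl⟩
    refine ⟨(l.drop a).take (b - a), l.drop (b + 1), ?_, fun u hu => ?_, hy, rfl⟩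
    · conv_lhs => rw [← take_append_drop (b - a) (drop a l)]
      rw [drop_drop, Nat.add_sub_cancel' hab, drop_eq_getElem_cons hb]
    · obtain ⟨i, hi, rfl⟩ := mem_iff_getElem.1 hu
      simp only [length_take, length_drop] at hi
      simpa [getElem_take, getElem_drop] using hgap (a + i) (by omega) (by omega)

theorem triple_infix_filter_iff {x y z : α} :
    [x, y, z] <:+: l.filter p ↔ ∃ a b c, ∃ (_ : a < b) (_ : b < c) (_ : c < l.length),
      l[a] = x ∧ l[b] = y ∧ l[c] = z ∧ p x ∧ p y ∧ p z ∧
      (∀ m (_ : a < m) (_ : m < b), p l[m] = false) ∧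
      (∀ m (_ : b < m) (_ : m < c), p l[m] = false) := by
  constructor
  · rintro ⟨s, t, h⟩
    rw [append_assoc, append_eq_filter_iff] at h
    obtain ⟨l₁, l₂, rfl, -, h⟩ := h
    rw [← drop_left (l₁ := l₁) (l₂ := l₂)] at h
    obtain ⟨a, ha, -, rfl, hx, -, h₁⟩ := filter_drop_eq_cons_iff.1 h
    obtain ⟨b, hb, hab, rfl, hy, hgap₁, h₂⟩ := filter_drop_eq_cons_iff.1 h₁
    obtain ⟨c, hc, hbc, rfl, hz, hgap₂, -⟩ := filter_drop_eq_cons_iff.1 h₂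
    exact ⟨a, b, c, hab, hbc, hc, rfl, rfl, rfl, hx, hy, hz, hgap₁, hgap₂⟩
  · rintro ⟨a, b, c, hab, hbc, hc, rfl, rfl, rfl, hx, hy, hz, hgap₁, hgap₂⟩
    have h := filter_drop_eq_cons_iff.2 ⟨c, hc, hbc, rfl, hz, hgap₂, rfl⟩
    replace h := filter_drop_eq_cons_iff.2 ⟨b, by omega, hab, rfl, hy, hgap₁, h⟩
    replace h := filter_drop_eq_cons_iff.2
      ⟨a, by omega, le_rfl, rfl, hx, fun _ h₁ h₂ => absurd h₂ (by omega), h⟩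
    refine ⟨(l.take a).filter p, (l.drop (c + 1)).filter p, ?_⟩
    conv_rhs => rw [← take_append_drop a l, filter_append, h]
    simp

theorem triple_sublist_iff {x y z : α} :
    [x, y, z] <+ l ↔ ∃ a b c, ∃ (_ : a < b) (_ : b < c) (_ : c < l.length),
      l[a] = x ∧ l[b] = y ∧ l[c] = z := by
  rw [sublist_iff_exists_fin_orderEmbedding_get_eq]
  constructor
  · rintro ⟨f, hf⟩
    exact ⟨f 0, f 1, f 2, f.lt_iff_lt.2 (Fin.lt_def.2 (by simp)),
      f.lt_iff_lt.2 (Fin.lt_def.2 (by simp)), (f 2).2, (hf 0).symm, (hf 1).symm, (hf 2).symm⟩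
  · rintro ⟨a, b, c, hab, hbc, hc, rfl, rfl, rfl⟩
    have hmono : StrictMono ![(⟨a, by omega⟩ : Fin l.length), ⟨b, by omega⟩, ⟨c, hc⟩] := by
      simp [Fin.strictMono_iff_lt_succ, Fin.forall_fin_two, hab, hbc]
    exact ⟨OrderEmbedding.ofStrictMono _ hmono, by simp [Fin.forall_fin_succ]⟩

end List

theorem StrictMono.exists_lt_iff_lt {f : ℕ → ℕ} (hf : StrictMono f) (k : ℕ) :
    ∃ k', ∀ x, f x < k ↔ x < k' := by
  have hex : ∃ x, k ≤ f x := ⟨k, hf.id_le k⟩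
  refine ⟨Nat.find hex, fun x => ⟨fun hx => ?_, fun hx => lt_of_not_ge (Nat.find_min hex hx)⟩⟩
  by_contra! h
  exact (hx.trans_le (Nat.find_spec hex)).not_ge (hf.monotone h)

namespace List

def HasDoubleDescent (l : List ℕ) : Prop :=
  ∃ a b c, [a, b, c] <:+: l ∧ c < b ∧ b < a

def IsSimsun (l : List ℕ) : Prop :=
  ∀ k, ¬ (l.filter (· < k)).HasDoubleDescent

def Contains231 (l : List ℕ) : Prop :=
  ∃ a b c, [a, b, c] <+ l ∧ c < a ∧ a < b

variable {l l₁ l₂ : List ℕ} {f : ℕ → ℕ}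

theorem hasDoubleDescent_map (hf : StrictMono f) :
    (l.map f).HasDoubleDescent ↔ l.HasDoubleDescent := by
  simp only [HasDoubleDescent, infix_map_iff]
  constructor
  · rintro ⟨_, _, _, ⟨l', hl, heq⟩, hcb, hba⟩
    simp only [eq_comm (a := [_, _, _]), map_eq_cons_iff, map_eq_nil_iff] at heq
    obtain ⟨a, _, rfl, rfl, b, _, rfl, rfl, c, _, rfl, rfl, rfl⟩ := heq
    exact ⟨a, b, c, hl, hf.lt_iff_lt.1 hcb, hf.lt_iff_lt.1 hba⟩
  · rintro ⟨a, b, c, hl, hcb, hba⟩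
    exact ⟨f a, f b, f c, ⟨[a, b, c], hl, rfl⟩, hf hcb, hf hba⟩

theorem contains231_map (hf : StrictMono f) :
    (l.map f).Contains231 ↔ l.Contains231 := by
  simp only [Contains231, sublist_map_iff]
  constructor
  · rintro ⟨_, _, _, ⟨l', hl, heq⟩, hca, hab⟩
    simp only [eq_comm (a := [_, _, _]), map_eq_cons_iff, map_eq_nil_iff] at heq
    obtain ⟨a, _, rfl, rfl, b, _, rfl, rfl, c, _, rfl, rfl, rfl⟩ := heq
    exact ⟨a, b, c, hl, hf.lt_iff_lt.1 hca, hf.lt_iff_lt.1 hab⟩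
  · rintro ⟨a, b, c, hl, hca, hab⟩
    exact ⟨f a, f b, f c, ⟨[a, b, c], hl, rfl⟩, hf hca, hf hab⟩

theorem isSimsun_map (hf : StrictMono f) : (l.map f).IsSimsun ↔ l.IsSimsun := by
  have hfilter : ∀ k k', (∀ x, f x < k ↔ x < k') →
      (((l.map f).filter (· < k)).HasDoubleDescent ↔ (l.filter (· < k')).HasDoubleDescent) := by
    intro k k' hk
    rw [filter_map, ← hasDoubleDescent_map hf (l := l.filter _)]
    simp only [Function.comp_def, hk]
  refine ⟨fun h k => ?_, fun h k => ?_⟩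
  · rw [← hfilter (f k) k fun x => hf.lt_iff_lt]
    exact h (f k)
  · obtain ⟨k', hk'⟩ := hf.exists_lt_iff_lt k
    rw [hfilter k k' hk']
    exact h k'

theorem hasDoubleDescent_append (h : ∀ x ∈ l₁, ∀ y ∈ l₂, x < y) :
    (l₁ ++ l₂).HasDoubleDescent ↔ l₁.HasDoubleDescent ∨ l₂.HasDoubleDescent := by
  refine ⟨fun ⟨a, b, c, hl, hcb, hba⟩ => ?_, ?_⟩
  · rcases infix_append_iff_ne_nil.1 hl with hl | hl | ⟨r₁, r₂, hr₁, hr₂, heq, h₁, h₂⟩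
    · exact .inl ⟨a, b, c, hl, hcb, hba⟩
    · exact .inr ⟨a, b, c, hl, hcb, hba⟩
    · obtain ⟨ha, hc⟩ := mem_left_and_mem_right_of_triple_eq_append heq hr₁ hr₂
      exact absurd (h a (h₁.subset ha) c (h₂.subset hc)) (by omega)
  · rintro (⟨a, b, c, hl, hcb, hba⟩ | ⟨a, b, c, hl, hcb, hba⟩)
    exacts [⟨a, b, c, hl.trans infix_append_left, hcb, hba⟩,
      ⟨a, b, c, hl.trans infix_append_right, hcb, hba⟩]

theorem contains231_append (h : ∀ x ∈ l₁, ∀ y ∈ l₂, x < y) :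
    (l₁ ++ l₂).Contains231 ↔ l₁.Contains231 ∨ l₂.Contains231 := by
  refine ⟨fun ⟨a, b, c, hl, hca, hab⟩ => ?_, ?_⟩
  · obtain ⟨r₁, r₂, heq, h₁, h₂⟩ := sublist_append_iff.1 hl
    by_cases hr₂ : r₂ = []
    · exact .inl ⟨a, b, c, by simpa [heq, hr₂] using h₁, hca, hab⟩
    by_cases hr₁ : r₁ = []
    · exact .inr ⟨a, b, c, by simpa [heq, hr₁] using h₂, hca, hab⟩
    obtain ⟨ha, hc⟩ := mem_left_and_mem_right_of_triple_eq_append heq hr₁ hr₂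
    exact absurd (h a (h₁.subset ha) c (h₂.subset hc)) (by omega)
  · rintro (⟨a, b, c, hl, hca, hab⟩ | ⟨a, b, c, hl, hca, hab⟩)
    exacts [⟨a, b, c, hl.trans (sublist_append_left _ _), hca, hab⟩,
      ⟨a, b, c, hl.trans (sublist_append_right _ _), hca, hab⟩]

theorem isSimsun_append (h : ∀ x ∈ l₁, ∀ y ∈ l₂, x < y) :
    (l₁ ++ l₂).IsSimsun ↔ l₁.IsSimsun ∧ l₂.IsSimsun := by
  have hsplit : ∀ k, ((l₁ ++ l₂).filter (· < k)).HasDoubleDescent ↔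
      (l₁.filter (· < k)).HasDoubleDescent ∨ (l₂.filter (· < k)).HasDoubleDescent := fun k => by
    rw [filter_append, hasDoubleDescent_append]
    simp only [mem_filter]
    exact fun x hx y hy => h x hx.1 y hy.1
  simp only [IsSimsun, hsplit, not_or, forall_and]

theorem contains231_cons_of_forall_lt {x : ℕ} (h : ∀ y ∈ l, y < x) :
    (x :: l).Contains231 ↔ l.Contains231 := by
  refine ⟨fun ⟨a, b, c, hl, hca, hab⟩ => ?_, fun ⟨a, b, c, hl, hca, hab⟩ =>
    ⟨a, b, c, hl.cons x, hca, hab⟩⟩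
  rcases sublist_cons_iff.1 hl with hl | ⟨r, hr, hl⟩
  · exact ⟨a, b, c, hl, hca, hab⟩
  · simp only [cons.injEq] at hr
    obtain ⟨rfl, rfl⟩ := hr
    exact absurd (h b (hl.subset (by simp))) (by omega)

theorem hasDoubleDescent_cons_cons_zero {x : ℕ} :
    (x :: 0 :: l).HasDoubleDescent ↔ (0 :: l).HasDoubleDescent := by
  refine ⟨fun ⟨a, b, c, hl, hcb, hba⟩ => ?_, fun ⟨a, b, c, hl, hcb, hba⟩ =>
    ⟨a, b, c, hl.trans (infix_cons infix_rfl), hcb, hba⟩⟩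
  rcases infix_cons_iff.1 hl with hl | hl
  · rcases l with _ | ⟨y, l⟩ <;> simp at hl
    omega
  · exact ⟨a, b, c, hl, hcb, hba⟩

theorem isSimsun_cons_cons_zero {x : ℕ} : (x :: 0 :: l).IsSimsun ↔ (0 :: l).IsSimsun := by
  refine forall_congr' fun k => not_congr ?_
  by_cases hx : x < k
  · simp [hx, show 0 < k by omega, hasDoubleDescent_cons_cons_zero]
  · simp [filter_cons, hx]

theorem isSimsun_of_length_lt (h : l.length < 3) : l.IsSimsun := by
  rintro k ⟨a, b, c, hl, -⟩
  have := hl.length_le.trans (filter_sublist (l := l)).length_le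
  simp at this
  omega

theorem not_contains231_of_length_lt (h : l.length < 3) : ¬ l.Contains231 := by
  rintro ⟨a, b, c, hl, -⟩
  have := hl.length_le
  simp at this
  omega

theorem IsSimsun.not_hasDoubleDescent (h : l.IsSimsun) : ¬ l.HasDoubleDescent := by
  have hfilter : l.filter (· < l.sum + 1) = l :=
    filter_eq_self.2 fun x hx => by simpa [Nat.lt_succ_iff] using le_sum_of_mem hx
  exact hfilter ▸ h (l.sum + 1)

theorem perm_range_iff {n : ℕ} : l ~ range n ↔ l.Nodup ∧ ∀ x, x ∈ l ↔ x < n :=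
  ⟨fun h => ⟨h.nodup_iff.2 nodup_range, fun x => by simpa using h.mem_iff⟩,
    fun ⟨hl, hmem⟩ => (perm_ext_iff_of_nodup hl nodup_range).2 (by simpa using hmem)⟩

theorem exists_perm_range_map_add {c m : ℕ} (hl : l.Nodup)
    (hmem : ∀ x, x ∈ l ↔ c ≤ x ∧ x < c + m) : ∃ s, s ~ range m ∧ s.map (· + c) = l := by
  refine ⟨l.map (· - c), perm_range_iff.2 ⟨hl.map_on fun x hx y hy hxy => ?_, fun x => ?_⟩, ?_⟩
  · have := (hmem x).1 hx; have := (hmem y).1 hy; omega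
  · simp only [mem_map]
    constructor
    · rintro ⟨y, hy, rfl⟩; have := (hmem y).1 hy; omega
    · intro hx; exact ⟨x + c, (hmem _).2 (by omega), by omega⟩
  · rw [map_map]
    conv_rhs => rw [← map_id l]
    exact map_congr_left fun x hx => by have := (hmem x).1 hx; simp; omega

end List

namespace SimsunAvoid231

open List

def zeroFirst (s : List ℕ) : List ℕ := 0 :: s.map (· + 1)

def zeroSecond (K : ℕ) (s t : List ℕ) : List ℕ :=
  (K + 1) :: 0 :: (s.map (· + 1) ++ t.map (· + (K + 2)))

variable {s t r : List ℕ} {K M n : ℕ}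

theorem isSimsun_zeroFirst : (zeroFirst s).IsSimsun ↔ s.IsSimsun := by
  rw [zeroFirst, ← singleton_append, isSimsun_append (by simp),
    isSimsun_map add_left_strictMono]
  simp [isSimsun_of_length_lt]

theorem contains231_zeroFirst : (zeroFirst s).Contains231 ↔ s.Contains231 := by
  rw [zeroFirst, ← singleton_append, contains231_append (by simp),
    contains231_map add_left_strictMono]
  simp [not_contains231_of_length_lt]

theorem zeroSecond_eq_cons_zeroFirst_append :
    zeroSecond K s t = (K + 1) :: zeroFirst s ++ t.map (· + (K + 2)) := by
  simp [zeroSecond, zeroFirst]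

theorem isSimsun_zeroSecond (hs : ∀ x ∈ s, x < K) :
    (zeroSecond K s t).IsSimsun ↔ s.IsSimsun ∧ t.IsSimsun := by
  rw [zeroSecond_eq_cons_zeroFirst_append, isSimsun_append, zeroFirst, isSimsun_cons_cons_zero,
    ← zeroFirst, isSimsun_zeroFirst, isSimsun_map add_left_strictMono]
  simp only [zeroFirst, mem_cons, mem_map]
  rintro x (rfl | ⟨y, hy, rfl⟩ | rfl | ⟨y, hy, rfl⟩) z ⟨w, -, rfl⟩ <;> grind

theorem contains231_zeroSecond (hs : ∀ x ∈ s, x < K) :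
    (zeroSecond K s t).Contains231 ↔ s.Contains231 ∨ t.Contains231 := by
  rw [zeroSecond_eq_cons_zeroFirst_append, contains231_append, contains231_cons_of_forall_lt,
    contains231_zeroFirst, contains231_map add_left_strictMono]
  · simp only [zeroFirst, mem_cons, mem_map]
    rintro x (rfl | ⟨y, hy, rfl⟩)
    · omega
    · have := hs y hy; omega
  · simp only [zeroFirst, mem_cons, mem_map]
    rintro x (rfl | ⟨y, hy, rfl⟩ | rfl | ⟨y, hy, rfl⟩) z ⟨w, -, rfl⟩ <;> grind

theorem zeroFirst_perm (hs : s ~ range n) : zeroFirst s ~ range (n + 1) := by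
  rw [range_succ_eq_map]
  exact (hs.map _).cons 0

theorem zeroSecond_perm (hs : s ~ range K) (ht : t ~ range M) :
    zeroSecond K s t ~ range (K + M + 2) := by
  rw [perm_range_iff] at hs ht ⊢
  refine ⟨?_, fun x => ?_⟩
  · simp only [zeroSecond, nodup_cons, nodup_append, mem_cons, mem_append, mem_map,
      hs.1.map (add_left_injective _), ht.1.map (add_left_injective _), hs.2, ht.2]
    grind
  · simp only [zeroSecond, mem_cons, mem_append, mem_map, hs.2, ht.2]
    constructor
    · omega
    · intro hx
      by_cases h1 : x = K + 1; · exact .inl h1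
      by_cases h2 : x = 0; · exact .inr (.inl h2)
      by_cases h3 : x < K + 1
      · exact .inr (.inr (.inl ⟨x - 1, by omega, by omega⟩))
      · exact .inr (.inr (.inr ⟨x - (K + 2), by omega, by omega⟩))

/-- `RS_n(231)`, with permutations of `{1, …, n}` written as words over `0, …, n - 1`. -/
def rs231 (n : ℕ) : Set (List ℕ) := {l | l ~ range n ∧ l.IsSimsun ∧ ¬ l.Contains231}

instance (n : ℕ) : Finite (rs231 n) :=
  ((range n).permutations.finite_toSet.subset fun _ hl => mem_permutations.2 hl.1).to_subtype

theorem zeroFirst_mem_rs231 (hs : s ∈ rs231 n) : zeroFirst s ∈ rs231 (n + 1) :=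
  ⟨zeroFirst_perm hs.1, isSimsun_zeroFirst.2 hs.2.1, contains231_zeroFirst.not.2 hs.2.2⟩

theorem zeroSecond_mem_rs231 (hs : s ∈ rs231 K) (ht : t ∈ rs231 M) :
    zeroSecond K s t ∈ rs231 (K + M + 2) := by
  have hsK : ∀ x ∈ s, x < K := fun x hx => by simpa using hs.1.subset hx
  exact ⟨zeroSecond_perm hs.1 ht.1, (isSimsun_zeroSecond hsK).2 ⟨hs.2.1, ht.2.1⟩,
    by rw [contains231_zeroSecond hsK]; exact not_or.2 ⟨hs.2.2, ht.2.2⟩⟩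

theorem eq_zero_cons_or_eq_cons_zero_cons {l : List ℕ} (hl : l.Nodup) (h0 : 0 ∈ l)
    (hsim : l.IsSimsun) (h231 : ¬ l.Contains231) :
    (∃ r, l = 0 :: r) ∨ ∃ x r, l = x :: 0 :: r := by
  obtain ⟨pre, r, rfl⟩ := append_of_mem h0
  rcases pre.eq_nil_or_concat' with rfl | ⟨pre, v, rfl⟩
  · exact .inl ⟨r, rfl⟩
  rcases pre.eq_nil_or_concat' with rfl | ⟨pre, u, rfl⟩
  · exact .inr ⟨v, r, rfl⟩
  exfalso
  have hnd : u ≠ v ∧ u ≠ 0 ∧ v ≠ 0 := by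
    simp only [append_assoc, singleton_append, nodup_append, nodup_cons, mem_cons] at hl
    grind
  rcases lt_or_gt_of_ne hnd.1 with huv | hvu
  · exact h231 ⟨u, v, 0, by simp, by omega, huv⟩
  · exact hsim.not_hasDoubleDescent ⟨u, v, 0, ⟨pre, r, by simp⟩, by omega, hvu⟩

theorem exists_zeroFirst_eq (h : 0 :: r ∈ rs231 (n + 1)) :
    ∃ s ∈ rs231 n, zeroFirst s = 0 :: r := by
  obtain ⟨hperm, hsim, h231⟩ := h
  rw [perm_range_iff, nodup_cons] at hperm
  obtain ⟨⟨h0, hnd⟩, hmem⟩ := hperm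
  obtain ⟨s, hs, rfl⟩ := exists_perm_range_map_add (c := 1) (m := n) hnd fun y => by
    have := hmem y; simp only [mem_cons] at this; grind
  exact ⟨s, ⟨hs, isSimsun_zeroFirst.1 hsim, contains231_zeroFirst.not.1 h231⟩, rfl⟩

theorem exists_zeroSecond_eq {x : ℕ} (h : x :: 0 :: r ∈ rs231 (n + 1)) :
    ∃ K < n, ∃ s ∈ rs231 K, ∃ t ∈ rs231 (n - 1 - K), zeroSecond K s t = x :: 0 :: r := by
  obtain ⟨hperm, hsim, h231⟩ := h
  rw [perm_range_iff] at hperm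
  obtain ⟨hnd, hmem⟩ := hperm
  simp only [nodup_cons, mem_cons] at hnd
  have hr : ∀ y, y ∈ r ↔ y ≠ x ∧ 0 < y ∧ y < n + 1 := fun y => by
    have := hmem y; simp only [mem_cons] at this; grind
  obtain ⟨K, rfl⟩ : ∃ K, x = K + 1 := Nat.exists_eq_add_one.2 (by have := hmem 0; grind)
  have hK : K < n := by have := hmem (K + 1); simp at this; omega
  -- an entry above `K + 1` followed by one below it would make a 231 with the leading `K + 1`
  have hsep : r.Pairwise fun a b => decide (b < K + 1) → decide (a < K + 1) := by
    refine pairwise_iff_forall_sublist.2 fun {a b} hab hb =>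
      decide_eq_true <| by_contra fun ha => ?_
    have : a ≠ K + 1 := ((hr a).1 (hab.subset (by simp))).1
    exact h231 ⟨K + 1, a, b, (hab.cons _).cons_cons _, by simpa using hb, by omega⟩
  obtain ⟨s, hs, hsr⟩ := exists_perm_range_map_add (c := 1) (m := K)
    (hnd.2.2.filter (· < K + 1)) fun y => by simp only [mem_filter, hr]; grind
  obtain ⟨t, ht, htr⟩ := exists_perm_range_map_add (c := K + 2) (m := n - 1 - K)
    (hnd.2.2.filter fun y => !decide (y < K + 1)) fun y => by simp only [mem_filter, hr]; grind
  have heq : zeroSecond K s t = (K + 1) :: 0 :: r := by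
    rw [zeroSecond, hsr, htr, filter_append_filter_not_eq_self hsep]
  have hsK : ∀ y ∈ s, y < K := fun y hy => by simpa using hs.subset hy
  rw [← heq, isSimsun_zeroSecond hsK] at hsim
  rw [← heq, contains231_zeroSecond hsK, not_or] at h231
  exact ⟨K, hK, s, ⟨hs, hsim.1, h231.1⟩, t, ⟨ht, hsim.2, h231.2⟩, heq⟩

theorem zeroFirst_injective : Function.Injective zeroFirst := fun s s' h =>
  map_injective_iff.2 (add_left_injective 1) (by simpa [zeroFirst] using h)

theorem zeroFirst_ne_zeroSecond {s' : List ℕ} : zeroFirst s ≠ zeroSecond K s' t := by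
  simp [zeroFirst, zeroSecond]

theorem zeroSecond_inj {K' : ℕ} {s' t' : List ℕ} (hs : s.length = K) (hs' : s'.length = K') :
    zeroSecond K s t = zeroSecond K' s' t' ↔ K = K' ∧ s = s' ∧ t = t' := by
  refine ⟨fun heq => ?_, by rintro ⟨rfl, rfl, rfl⟩; rfl⟩
  simp only [zeroSecond, cons.injEq, Nat.add_right_cancel_iff, true_and] at heq
  obtain ⟨rfl, heq⟩ := heq
  obtain ⟨hs, ht⟩ := append_inj heq (by simp [hs, hs'])
  exact ⟨rfl, map_injective_iff.2 (add_left_injective 1) hs,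
    map_injective_iff.2 (add_left_injective _) ht⟩

def glue (n : ℕ) :
    rs231 n ⊕ (Σ k : Finset.range n, rs231 k × rs231 (n - 1 - k)) → rs231 (n + 1)
  | .inl s => ⟨zeroFirst s, zeroFirst_mem_rs231 s.2⟩
  | .inr ⟨k, s, t⟩ => ⟨zeroSecond k s t, by
      have hk := Finset.mem_range.1 k.2
      simpa [show k + (n - 1 - k) + 2 = n + 1 by omega] using zeroSecond_mem_rs231 s.2 t.2⟩

theorem glue_injective (n : ℕ) : Function.Injective (glue n) := by
  rintro (s | ⟨k, s, t⟩) (s' | ⟨k', s', t'⟩) h <;> simp only [glue, Subtype.mk.injEq] at h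
  · exact congrArg Sum.inl (Subtype.ext (zeroFirst_injective h))
  · exact absurd h zeroFirst_ne_zeroSecond
  · exact absurd h.symm zeroFirst_ne_zeroSecond
  · obtain ⟨hk, hs, ht⟩ := (zeroSecond_inj (by simpa using s.2.1.length_eq)
      (by simpa using s'.2.1.length_eq)).1 h
    obtain rfl : k = k' := Subtype.ext hk
    obtain rfl : s = s' := Subtype.ext hs
    obtain rfl : t = t' := Subtype.ext ht
    rfl

theorem glue_surjective (n : ℕ) : Function.Surjective (glue n) := by
  rintro ⟨l, hl⟩
  rcases eq_zero_cons_or_eq_cons_zero_cons (hl.1.nodup_iff.2 nodup_range)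
    (hl.1.mem_iff.2 (by simp)) hl.2.1 hl.2.2 with ⟨r, rfl⟩ | ⟨x, r, rfl⟩
  · obtain ⟨s, hs, heq⟩ := exists_zeroFirst_eq hl
    exact ⟨.inl ⟨s, hs⟩, Subtype.ext heq⟩
  · obtain ⟨K, hK, s, hs, t, ht, heq⟩ := exists_zeroSecond_eq hl
    exact ⟨.inr ⟨⟨K, Finset.mem_range.2 hK⟩, ⟨s, hs⟩, ⟨t, ht⟩⟩, Subtype.ext heq⟩

theorem card_rs231_succ (n : ℕ) :
    Nat.card (rs231 (n + 1)) = Nat.card (rs231 n) +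
      ∑ k ∈ (Finset.range n).attach, Nat.card (rs231 k) * Nat.card (rs231 (n - 1 - k)) := by
  rw [← Nat.card_eq_of_bijective _ ⟨glue_injective n, glue_surjective n⟩, Nat.card_sum,
    Nat.card_sigma]
  simp [Nat.card_prod, Finset.univ_eq_attach]

theorem rs231_zero : rs231 0 = {[]} := by
  ext l
  simp only [rs231, range_zero, perm_nil, Set.mem_ofPred_eq, Set.mem_singleton_iff]
  refine ⟨fun h => h.1, ?_⟩
  rintro rfl
  exact ⟨rfl, isSimsun_of_length_lt (by simp), not_contains231_of_length_lt (by simp)⟩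

theorem card_rs231 (n : ℕ) : Nat.card (rs231 n) = motzkin n := by
  induction n using Nat.strong_induction_on with
  | _ n ih =>
    rcases n with _ | n
    · simp [rs231_zero, motzkin]
    · rw [card_rs231_succ, motzkin, ih n n.lt_succ_self]
      congr 1
      refine Finset.sum_congr rfl fun k _ => ?_
      have := Finset.mem_range.1 k.2
      rw [ih k (by omega), ih (n - 1 - k) (by omega)]

def oneLine (π : Equiv.Perm (Fin n)) : List ℕ := ofFn fun i => (π i : ℕ)

@[simp] theorem length_oneLine (π : Equiv.Perm (Fin n)) : (oneLine π).length = n := by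
  simp [oneLine]

@[simp] theorem getElem_oneLine (π : Equiv.Perm (Fin n)) (i : ℕ) (hi : i < (oneLine π).length) :
    (oneLine π)[i] = π ⟨i, by simpa using hi⟩ := by
  simp [oneLine]

theorem isSimsun_iff_oneLine (π : Equiv.Perm (Fin n)) : IsSimsun π ↔ (oneLine π).IsSimsun := by
  refine forall_congr' fun k => not_congr ?_
  simp only [HasDoubleDescent, triple_infix_filter_iff]
  constructor
  · rintro ⟨a, b, c, hab, hbc, ha, hb, hc, hgap₁, hgap₂, hcb, hba⟩
    refine ⟨_, _, _, ⟨a, b, c, hab, hbc, by simp, rfl, rfl, rfl, by simpa, by simpa, by simpa,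
      fun m h₁ h₂ => ?_, fun m h₁ h₂ => ?_⟩, by simpa, by simpa⟩
    · simpa using hgap₁ ⟨m, by omega⟩ h₁ h₂
    · simpa using hgap₂ ⟨m, by omega⟩ h₁ h₂
  · rintro ⟨_, _, _, ⟨a, b, c, hab, hbc, hc, rfl, rfl, rfl, ha, hb, hc', hgap₁, hgap₂⟩, hcb, hba⟩
    simp only [length_oneLine] at hc
    refine ⟨⟨a, by omega⟩, ⟨b, by omega⟩, ⟨c, hc⟩, hab, hbc, by simpa using ha,
      by simpa using hb, by simpa using hc', fun m h₁ h₂ => ?_, fun m h₁ h₂ => ?_,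
      by simpa using hcb, by simpa using hba⟩
    · simpa using hgap₁ m h₁ h₂
    · simpa using hgap₂ m h₁ h₂

theorem contains231_iff_oneLine (π : Equiv.Perm (Fin n)) :
    Contains231 π ↔ (oneLine π).Contains231 := by
  simp only [_root_.Contains231, List.Contains231, triple_sublist_iff]
  constructor
  · rintro ⟨a, b, c, hab, hbc, hca, hab'⟩
    exact ⟨_, _, _, ⟨a, b, c, hab, hbc, by simp, rfl, rfl, rfl⟩, by simpa, by simpa⟩
  · rintro ⟨_, _, _, ⟨a, b, c, hab, hbc, hc, rfl, rfl, rfl⟩, hca, hab'⟩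
    simp only [length_oneLine] at hc
    exact ⟨⟨a, by omega⟩, ⟨b, by omega⟩, ⟨c, hc⟩, hab, hbc, by simpa using hca, by simpa using hab'⟩

theorem oneLine_perm (π : Equiv.Perm (Fin n)) : oneLine π ~ range n := by
  refine perm_range_iff.2 ⟨nodup_ofFn.2 (Fin.val_injective.comp π.injective), fun x => ?_⟩
  simp only [oneLine, mem_ofFn]
  exact ⟨by rintro ⟨i, rfl⟩; exact (π i).2, fun hx => ⟨π.symm ⟨x, hx⟩, by simp⟩⟩

theorem oneLine_injective : Function.Injective (oneLine (n := n)) := fun _ _ h =>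
  Equiv.ext fun i => Fin.ext (congrFun (ofFn_injective h) i)

theorem exists_oneLine_eq {l : List ℕ} (hl : l ~ range n) :
    ∃ π : Equiv.Perm (Fin n), oneLine π = l := by
  obtain rfl : l.length = n := by simpa using hl.length_eq
  have hlt : ∀ i : Fin l.length, l[i] < l.length := fun i => by
    simpa using hl.subset (getElem_mem i.2)
  let g : Fin l.length → Fin l.length := fun i => ⟨l[i], hlt i⟩
  have hg : Function.Injective g := fun i j hij =>
    Fin.ext ((hl.nodup_iff.2 nodup_range).getElem_inj_iff.1 (congrArg Fin.val hij))
  exact ⟨Equiv.ofBijective g (Finite.injective_iff_bijective.1 hg), by simp [oneLine, g]⟩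

theorem card_eq_card_rs231 :
    Nat.card {π : Equiv.Perm (Fin n) // IsSimsun π ∧ ¬ Contains231 π} = Nat.card (rs231 n) := by
  refine Nat.card_eq_of_bijective (fun π => ⟨oneLine π.1, oneLine_perm π.1,
    (isSimsun_iff_oneLine π.1).1 π.2.1, (contains231_iff_oneLine π.1).not.1 π.2.2⟩) ⟨?_, ?_⟩
  · exact fun π σ h => Subtype.ext (oneLine_injective (congrArg Subtype.val h))
  · rintro ⟨l, hl, hsim, h231⟩
    obtain ⟨π, rfl⟩ := exists_oneLine_eq hl
    exact ⟨⟨π, (isSimsun_iff_oneLine π).2 hsim, (contains231_iff_oneLine π).not.2 h231⟩, rfl⟩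

end SimsunAvoid231

/-- The number of simsun permutations of `{1, …, n}` avoiding the pattern 231
equals the Motzkin number `M n`. -/
theorem simsun_avoid231_count (n : ℕ) :
    Nat.card {π : Equiv.Perm (Fin n) // IsSimsun π ∧ ¬ Contains231 π} = motzkin n := by
  rw [SimsunAvoid231.card_eq_card_rs231, SimsunAvoid231.card_rs231]
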